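/- Assume λ₋ = λ₊ = 1, c·N + d ≠ 0 and let ϱ₋, ϱ₊ ∈ ℝ. Define the stationary two-points correlation function φ_ss on T_N ∪ ∂T_N by φ_ss(x,y) = d·(ϱ₊ − ϱ₋)²·[ (N−y)·x / (N²·(cN + d)) − 1_{x=y} / (2N·(cN + d)) ] for (x,y) ∈ T_N and φ_ss ≡ 0 on ∂T_N. Then, with ϱ_ss(x) = (ϱ₊ − ϱ₋)·x/N + ϱ₋ the stationary density profile, φ_ss satisfies Δ²ᴰ_N φ_ss(x,y) = −d·N²·(ϱ_ss(x+1) − ϱ_ss(x))²·1_{y = x+1} = −d·(ϱ₊ − ϱ₋)²·1_{y = x+1} for every (x,y) ∈ T_N. In particular max over T_N of |φ_ss| is bounded by a constant times 1/N. -/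

import Mathlib

/-!
Up to the factor `d (ϱ₊ − ϱ₋)² / (cN + d)`, `φ_ss` is `(N − y) x / N²` minus the diagonal
correction `1_{x=y} / (2N)`. The bilinear part is discretely harmonic in each variable, so the
nearest-neighbour part of `Δ²ᴰ_N` only sees the diagonal: there the defect `−2cN` of the bilinear
part is cancelled by the correction, while on the upper diagonal the `d`-term and the correction
leave `−(cN + d)`, which the factor turns into `−d (ϱ₊ − ϱ₋)²`. The bound on `φ_ss` is
`(N − y) x ≤ N² / 4`.
-/

noncomputable section

/-- Left jump rate of the two-dimensional walk: `c_{z,z−1} = cλ₋` if `z = 1`, else `c`. -/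
def cMinus (c lm : ℝ) (z : ℤ) : ℝ := if z = 1 then c * lm else c

/-- Right jump rate of the two-dimensional walk: `c_{z,z+1} = cλ₊` if `z = N−1`, else `c`. -/
def cPlus (N : ℤ) (c lp : ℝ) (z : ℤ) : ℝ := if z = N - 1 then c * lp else c

/-- The generator `Δ²ᴰ_N` of the two-dimensional random walk on the triangle
`T_N = {(x,y) : 1 ≤ x ≤ y ≤ N−1}` (absorbed at `∂T_N`), acting on functions
`f : ℤ × ℤ → ℝ`: for `x < y` it is the nearest-neighbour operator with rates
`cMinus`/`cPlus` plus the extra diagonal term `d N² (f(x,x) + f(x+1,x+1) − 2f(x,x+1))`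
on the upper diagonal `y = x+1`; for `x = y` it is
`2N² (c_{x,x−1} f(x−1,x) + c_{x,x+1} f(x,x+1) − (c_{x,x−1}+c_{x,x+1}) f(x,x))`. -/
def lap2D (N : ℤ) (c d lm lp : ℝ) (f : ℤ → ℤ → ℝ) (x y : ℤ) : ℝ :=
  if x = y then
    2 * (N : ℝ) ^ 2 * (cMinus c lm x * f (x - 1) x + cPlus N c lp x * f x (x + 1)
      - (cMinus c lm x + cPlus N c lp x) * f x x)
  else
    (N : ℝ) ^ 2 * (cMinus c lm x * (f (x - 1) y - f x y)
        + cPlus N c lp x * (f (x + 1) y - f x y)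
        + cMinus c lm y * (f x (y - 1) - f x y)
        + cPlus N c lp y * (f x (y + 1) - f x y))
      + d * (N : ℝ) ^ 2 * (f x x + f (x + 1) (x + 1) - 2 * f x (x + 1))
        * (if y = x + 1 then 1 else 0)

@[simp]
lemma cMinus_one (c : ℝ) (z : ℤ) : cMinus c 1 z = c := by
  simp [cMinus]

@[simp]
lemma cPlus_one (N : ℤ) (c : ℝ) (z : ℤ) : cPlus N c 1 z = c := by
  simp [cPlus]

lemma lap2D_const_mul (N : ℤ) (c d lm lp K : ℝ) (f : ℤ → ℤ → ℝ) (x y : ℤ) :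
    lap2D N c d lm lp (fun a b => K * f a b) x y = K * lap2D N c d lm lp f x y := by
  unfold lap2D
  split_ifs <;> ring

/-- At a point of `T_N`, `lap2D` reads `f` only on `T_N ∪ ∂T_N` minus the corners `(0,0)`, `(N,N)`. -/
lemma lap2D_congr {N : ℤ} {c d lm lp : ℝ} {f g : ℤ → ℤ → ℝ}
    (hfg : ∀ a b : ℤ, 0 ≤ a → a ≤ b → b ≤ N → 1 ≤ b → a ≤ N - 1 → f a b = g a b)
    {x y : ℤ} (hx : 1 ≤ x) (hxy : x ≤ y) (hy : y ≤ N - 1) :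
    lap2D N c d lm lp f x y = lap2D N c d lm lp g x y := by
  unfold lap2D
  by_cases hdiag : x = y
  · subst hdiag
    simp only [if_true]
    rw [hfg (x - 1) x (by omega) (by omega) (by omega) (by omega) (by omega),
      hfg x (x + 1) (by omega) (by omega) (by omega) (by omega) (by omega),
      hfg x x (by omega) (by omega) (by omega) (by omega) (by omega)]
  · simp only [hdiag, if_false]
    rw [hfg (x - 1) y (by omega) (by omega) (by omega) (by omega) (by omega),
      hfg (x + 1) y (by omega) (by omega) (by omega) (by omega) (by omega),
      hfg x (y - 1) (by omega) (by omega) (by omega) (by omega) (by omega),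
      hfg x (y + 1) (by omega) (by omega) (by omega) (by omega) (by omega),
      hfg x y (by omega) (by omega) (by omega) (by omega) (by omega),
      hfg x x (by omega) (by omega) (by omega) (by omega) (by omega),
      hfg (x + 1) (x + 1) (by omega) (by omega) (by omega) (by omega) (by omega),
      hfg x (x + 1) (by omega) (by omega) (by omega) (by omega) (by omega)]

/-- `φ_ss` up to the factor `d (ϱ₊ − ϱ₋)² / (cN + d)`, written on all of `ℤ × ℤ`. -/
def correlationShape (N : ℤ) (x y : ℤ) : ℝ :=
  ((N : ℝ) - y) * x / (N : ℝ) ^ 2 - if x = y then 1 / (2 * (N : ℝ)) else 0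

lemma lap2D_correlationShape {N : ℤ} (hN : (N : ℝ) ≠ 0) (c d : ℝ) {x y : ℤ} (hxy : x ≤ y) :
    lap2D N c d 1 1 (correlationShape N) x y = -(c * N + d) * if y = x + 1 then 1 else 0 := by
  rcases hxy.eq_or_lt with rfl | hlt
  · simp only [lap2D, correlationShape, cMinus_one, cPlus_one, if_pos, show x - 1 ≠ x by omega,
      show x ≠ x + 1 by omega, if_false]
    field_simp
    push_cast
    ring
  rcases (show x + 1 ≤ y by omega).eq_or_lt with rfl | hlt'
  · simp only [lap2D, correlationShape, cMinus_one, cPlus_one, show x ≠ x + 1 by omega,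
      show x - 1 ≠ x + 1 by omega, show x ≠ x + 1 + 1 by omega, show x + 1 - 1 = x by omega,
      if_false, if_true]
    field_simp
    push_cast
    ring
  · simp only [lap2D, correlationShape, cMinus_one, cPlus_one, show x ≠ y by omega,
      show x - 1 ≠ y by omega, show x + 1 ≠ y by omega, show x ≠ y - 1 by omega,
      show x ≠ y + 1 by omega, show y ≠ x + 1 by omega, if_false]
    field_simp
    push_cast
    ring

lemma abs_correlationShape_le {N : ℤ} (hN : (1 : ℝ) ≤ N) {x y : ℤ} (hx : 0 ≤ x) (hxy : x ≤ y)
    (hy : y ≤ N) : |correlationShape N x y| ≤ 1 / 2 := by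
  have hx' : (0 : ℝ) ≤ x := by exact_mod_cast hx
  have hxy' : (x : ℝ) ≤ y := by exact_mod_cast hxy
  have hy' : (y : ℝ) ≤ N := by exact_mod_cast hy
  have hN2 : (0 : ℝ) < (N : ℝ) ^ 2 := by positivity
  have hbil_nonneg : 0 ≤ ((N : ℝ) - y) * x / (N : ℝ) ^ 2 := by
    apply div_nonneg _ hN2.le
    nlinarith
  have hbil_le : ((N : ℝ) - y) * x / (N : ℝ) ^ 2 ≤ 1 / 4 := by
    rw [div_le_iff₀ hN2]
    nlinarith [sq_nonneg ((N : ℝ) - 2 * x)]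
  have hdiag_nonneg : (0 : ℝ) ≤ 1 / (2 * N) := by positivity
  have hdiag_le : 1 / (2 * (N : ℝ)) ≤ 1 / 2 := by
    gcongr
    linarith
  rw [correlationShape, abs_le]
  split_ifs <;> constructor <;> linarith

lemma eq_mul_correlationShape {N : ℤ} {c d rm rp : ℝ} (hN : (N : ℝ) ≠ 0)
    (hcd : c * (N : ℝ) + d ≠ 0) {φ : ℤ → ℤ → ℝ}
    (hφ : ∀ x y : ℤ, 1 ≤ x → x ≤ y → y ≤ N - 1 →
      φ x y = d * (rp - rm) ^ 2 * (((N : ℝ) - y) * x / ((N : ℝ) ^ 2 * (c * N + d))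
        - (if x = y then 1 / (2 * N * (c * N + d)) else 0)))
    (hφ0 : ∀ y : ℤ, 0 ≤ y → y ≤ N → φ 0 y = 0)
    (hφN : ∀ x : ℤ, 0 ≤ x → x ≤ N → φ x N = 0)
    (x y : ℤ) (hx : 0 ≤ x) (hxy : x ≤ y) (hy : y ≤ N) (hy1 : 1 ≤ y) (hxN : x ≤ N - 1) :
    φ x y = d * (rp - rm) ^ 2 / (c * N + d) * correlationShape N x y := by
  rcases (show x = 0 ∨ y = N ∨ (1 ≤ x ∧ y ≤ N - 1) by omega) with rfl | hyN | ⟨hx1, hyN⟩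
  · simp [hφ0 y (by omega) hy, correlationShape, show (0 : ℤ) ≠ y by omega]
  · subst hyN
    simp [hφN x hx hxy, correlationShape, show x ≠ y by omega]
  · rw [hφ x y hx1 hxy hyN, correlationShape]
    split_ifs
    · field_simp
    · rw [sub_zero, sub_zero]
      field_simp

theorem stationary_correlation_general (N : ℤ) (hN : 5 ≤ N) (c d : ℝ)
    (hcd : c * (N : ℝ) + d ≠ 0) (rm rp : ℝ) (φ : ℤ → ℤ → ℝ) (ρ : ℤ → ℝ)
    (hφ : ∀ x y : ℤ, 1 ≤ x → x ≤ y → y ≤ N - 1 →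
      φ x y = d * (rp - rm) ^ 2 * (((N : ℝ) - y) * x / ((N : ℝ) ^ 2 * (c * N + d))
        - (if x = y then 1 / (2 * N * (c * N + d)) else 0)))
    (hφ0 : ∀ y : ℤ, 0 ≤ y → y ≤ N → φ 0 y = 0)
    (hφN : ∀ x : ℤ, 0 ≤ x → x ≤ N → φ x N = 0)
    (hρ : ∀ x : ℤ, ρ x = (rp - rm) * (x : ℝ) / N + rm) :
    ∀ x y : ℤ, 1 ≤ x → x ≤ y → y ≤ N - 1 →
      lap2D N c d 1 1 φ x y
          = -d * (N : ℝ) ^ 2 * (ρ (x + 1) - ρ x) ^ 2 * (if y = x + 1 then 1 else 0)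
        ∧ lap2D N c d 1 1 φ x y
          = -d * (rp - rm) ^ 2 * (if y = x + 1 then 1 else 0)
        ∧ |φ x y| ≤ |d| * (rp - rm) ^ 2 / (2 * |c * (N : ℝ) + d|) := by
  have hN1 : (1 : ℝ) ≤ N := by exact_mod_cast (show (1 : ℤ) ≤ N by omega)
  have hN0 : (N : ℝ) ≠ 0 := by positivity
  have hφK := eq_mul_correlationShape hN0 hcd hφ hφ0 hφN
  set K := d * (rp - rm) ^ 2 / (c * N + d) with hK
  intro x y hx hxy hy
  have hlap : lap2D N c d 1 1 φ x y = -d * (rp - rm) ^ 2 * (if y = x + 1 then 1 else 0) := by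
    rw [lap2D_congr hφK hx hxy hy, lap2D_const_mul, lap2D_correlationShape hN0 c d hxy, hK]
    field_simp
  have hstep : (N : ℝ) ^ 2 * (ρ (x + 1) - ρ x) ^ 2 = (rp - rm) ^ 2 := by
    rw [hρ, hρ]
    push_cast
    field_simp
    ring
  refine ⟨by rw [hlap, ← hstep]; ring, hlap, ?_⟩
  rw [hφK x y (by omega) hxy (by omega) (by omega) (by omega), abs_mul]
  calc |K| * |correlationShape N x y| ≤ |K| * (1 / 2) := by
        gcongr
        exact abs_correlationShape_le hN1 (by omega) hxy (by omega)
    _ = |d| * (rp - rm) ^ 2 / (2 * |c * (N : ℝ) + d|) := by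
        rw [hK, abs_div, abs_mul, abs_of_nonneg (sq_nonneg (rp - rm))]
        ring

/-- For `λ₋ = λ₊ = 1` and `cN + d ≠ 0`, the stationary two-points
correlation function `φ_ss(x,y) = d(ϱ₊−ϱ₋)²[(N−y)x/(N²(cN+d)) − 1_{x=y}/(2N(cN+d))]`
on `T_N` (vanishing on `∂T_N`) satisfies, with `ϱ_ss(x) = (ϱ₊−ϱ₋)x/N + ϱ₋ `,
`Δ²ᴰ_N φ_ss(x,y) = −dN²(ϱ_ss(x+1)−ϱ_ss(x))² 1_{y=x+1} = −d(ϱ₊−ϱ₋)² 1_{y=x+1}` on `T_N`.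
In particular `max_{T_N} |φ_ss|` is bounded by a constant times `1/N`, here in the
explicit form `|φ_ss(x,y)| ≤ |d|(ϱ₊−ϱ₋)²/(2|cN+d|)`. -/
theorem stationary_correlation (N : ℤ) (hN : 5 ≤ N) (c d : ℝ) (hc : 0 < c)
    (hcd : c * (N : ℝ) + d ≠ 0) (rm rp : ℝ) (φ : ℤ → ℤ → ℝ) (ρ : ℤ → ℝ)
    (hφ : ∀ x y : ℤ, 1 ≤ x → x ≤ y → y ≤ N - 1 →
      φ x y = d * (rp - rm) ^ 2 * (((N : ℝ) - y) * x / ((N : ℝ) ^ 2 * (c * N + d))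
        - (if x = y then 1 / (2 * N * (c * N + d)) else 0)))
    (hφ0 : ∀ y : ℤ, 0 ≤ y → y ≤ N → φ 0 y = 0)
    (hφN : ∀ x : ℤ, 0 ≤ x → x ≤ N → φ x N = 0)
    (hρ : ∀ x : ℤ, ρ x = (rp - rm) * (x : ℝ) / N + rm) :
    ∀ x y : ℤ, 1 ≤ x → x ≤ y → y ≤ N - 1 →
      lap2D N c d 1 1 φ x y
          = -d * (N : ℝ) ^ 2 * (ρ (x + 1) - ρ x) ^ 2 * (if y = x + 1 then 1 else 0)
        ∧ lap2D N c d 1 1 φ x y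
          = -d * (rp - rm) ^ 2 * (if y = x + 1 then 1 else 0)
        ∧ |φ x y| ≤ |d| * (rp - rm) ^ 2 / (2 * |c * (N : ℝ) + d|) :=
  stationary_correlation_general N hN c d hcd rm rp φ ρ hφ hφ0 hφN hρ

end
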